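/- Let A be a partial approximation operator on L^c. If (a,b) is A-reliable, (c,d) is A-prudent, and (a,b) ≤_p (c,d), then (c↓(b), c↑(a)) ≤_p (c↓(d), c↑(c)): the stable revision operator is monotone with respect to the precision order. -/

import Mathlib

variable {L : Type*} [CompleteLattice L]

/-- The precision ordering on pairs of lattice elements:
`(x, y) ≤ₚ (x', y')` iff `x ≤ x'` and `y' ≤ y`. -/
def precLE (p q : L × L) : Prop := p.1 ≤ q.1 ∧ q.2 ≤ p.2

/-- A pair `(x, y)` is consistent if `x ≤ y`. -/
def ConsistentPair (p : L × L) : Prop := p.1 ≤ p.2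

/-- A partial approximation operator on the consistent pairs `L^c` of a complete
lattice `L`, given by its two component functions `A1`, `A2`.  It maps consistent
pairs to consistent pairs, is `≤ₚ`-monotone on consistent pairs, and has equal
components on the diagonal. -/
structure PartialApprox (L : Type*) [CompleteLattice L] where
  A1 : L → L → L
  A2 : L → L → L
  cons : ∀ x y : L, x ≤ y → A1 x y ≤ A2 x y
  mono1 : ∀ x y x' y' : L, x ≤ y → x' ≤ y' → x ≤ x' → y' ≤ y → A1 x y ≤ A1 x' y'
  mono2 : ∀ x y x' y' : L, x ≤ y → x' ≤ y' → x ≤ x' → y' ≤ y → A2 x' y' ≤ A2 x y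
  diag : ∀ x : L, A1 x x = A2 x x

namespace PartialApprox

/-- `(a, b)` is `A`-reliable if it is consistent and `(a, b) ≤ₚ A(a, b)`. -/
def reliable (A : PartialApprox L) (a b : L) : Prop :=
  a ≤ b ∧ a ≤ A.A1 a b ∧ A.A2 a b ≤ b

/-- The least fixpoint of `A.A1 (·, b)` on the interval `[⊥, b]`
(for `A`-reliable pairs this least fixpoint exists and equals this `sInf`). -/
def cdown (A : PartialApprox L) (b : L) : L :=
  sInf {z | z ≤ b ∧ A.A1 z b = z}

/-- The least fixpoint of `A.A2 (a, ·)` on the interval `[a, ⊤]`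
(for `A`-reliable pairs this least fixpoint exists and equals this `sInf`). -/
def cup (A : PartialApprox L) (a : L) : L :=
  sInf {z | a ≤ z ∧ A.A2 a z = z}

/-- `(a, b)` is `A`-prudent if it is `A`-reliable and `a ≤ c↓(b)`. -/
def prudent (A : PartialApprox L) (a b : L) : Prop :=
  A.reliable a b ∧ a ≤ A.cdown b

/-- `(x, y)` is a stable fixpoint of `A` if it is `A`-reliable, `x = c↓(y)`
and `y = c↑(x)`. -/
def stableFix (A : PartialApprox L) (x y : L) : Prop :=
  A.reliable x y ∧ x = A.cdown y ∧ y = A.cup x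

end PartialApprox

/-!
Both `c↓(b)` and `c↑(a)` are least fixpoints of maps that are monotone on an interval and send
its endpoints inwards, so by the Knaster–Tarski argument each is the least prefixed point there.
Every inequality is then obtained by exhibiting a prefixed point: `c↓(d)` for `A¹(·, b)`,
`c↑(a) ⊓ d` for `A¹(·, d)`, which with prudence gives `c ≤ c↓(d) ≤ c↑(a)`, and finally `c↑(a)`
for `A²(c, ·)`.
-/

open Set

section IccFixedPoints

variable {α : Type*} [CompleteLattice α] {f : α → α} {lo hi : α}

theorem isLeast_sInf_fixedPoints_Icc (hle : lo ≤ hi) (hf : MonotoneOn f (Icc lo hi))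
    (hlo : lo ≤ f lo) (hhi : f hi ≤ hi) :
    IsLeast {z | z ∈ Icc lo hi ∧ f z ≤ z} (sInf {z | z ∈ Icc lo hi ∧ f z = z}) := by
  set P := {z | z ∈ Icc lo hi ∧ f z ≤ z}
  set m := sInf P
  have hm_Icc : m ∈ Icc lo hi := ⟨le_sInf fun z hz => hz.1.1, sInf_le ⟨⟨hle, le_rfl⟩, hhi⟩⟩
  have hm_prefixed : f m ≤ m :=
    le_sInf fun z hz => (hf hm_Icc hz.1 (sInf_le hz)).trans hz.2
  have hfm_Icc : f m ∈ Icc lo hi :=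
    ⟨hlo.trans (hf ⟨le_rfl, hle⟩ hm_Icc hm_Icc.1), hm_prefixed.trans hm_Icc.2⟩
  have hm_fixed : f m = m :=
    le_antisymm hm_prefixed (sInf_le ⟨hfm_Icc, hf hfm_Icc hm_Icc hm_prefixed⟩)
  have hm_eq : sInf {z | z ∈ Icc lo hi ∧ f z = z} = m :=
    le_antisymm (sInf_le ⟨hm_Icc, hm_fixed⟩) (sInf_le_sInf fun z hz => ⟨hz.1, hz.2.le⟩)
  rw [hm_eq]
  exact ⟨⟨hm_Icc, hm_prefixed⟩, fun z hz => sInf_le hz⟩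

end IccFixedPoints

namespace PartialApprox

variable {A : PartialApprox L} {a b c d : L}

theorem reliable.A1_self_le (h : A.reliable a b) : A.A1 b b ≤ b :=
  calc A.A1 b b = A.A2 b b := A.diag b
    _ ≤ A.A2 a b := A.mono2 a b b b h.1 le_rfl h.1 le_rfl
    _ ≤ b := h.2.2

theorem reliable.le_A2_self (h : A.reliable a b) : a ≤ A.A2 a a :=
  calc a ≤ A.A1 a b := h.2.1
    _ ≤ A.A1 a a := A.mono1 a b a a h.1 le_rfl le_rfl h.1
    _ = A.A2 a a := A.diag a

variable (A)

theorem isLeast_cdown (hb : A.A1 b b ≤ b) :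
    IsLeast {z | z ≤ b ∧ A.A1 z b ≤ z} (A.cdown b) := by
  have hmono : MonotoneOn (A.A1 · b) (Icc ⊥ b) := fun x hx y hy hxy =>
    A.mono1 x b y b hx.2 hy.2 hxy le_rfl
  simpa [cdown, mem_Icc] using
    isLeast_sInf_fixedPoints_Icc bot_le hmono bot_le hb

theorem isLeast_cup (ha : a ≤ A.A2 a a) :
    IsLeast {z | a ≤ z ∧ A.A2 a z ≤ z} (A.cup a) := by
  have hmono : MonotoneOn (A.A2 a) (Icc a ⊤) := fun x hx y hy hxy =>
    A.mono2 a y a x hy.1 hx.1 le_rfl hxy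
  simpa [cup, mem_Icc] using
    isLeast_sInf_fixedPoints_Icc le_top hmono ha le_top

theorem cdown_le_cdown (hb : A.A1 b b ≤ b) (hd : A.A1 d d ≤ d) (hdb : d ≤ b) :
    A.cdown b ≤ A.cdown d := by
  obtain ⟨⟨hd_le, hd_prefixed⟩, -⟩ := A.isLeast_cdown hd
  refine (A.isLeast_cdown hb).2 ⟨hd_le.trans hdb, ?_⟩
  calc A.A1 (A.cdown d) b ≤ A.A1 (A.cdown d) d :=
        A.mono1 _ b _ d (hd_le.trans hdb) hd_le le_rfl hdb
    _ ≤ A.cdown d := hd_prefixed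

theorem cdown_le_cup (hd : A.A1 d d ≤ d) (ha : a ≤ A.A2 a a) (had : a ≤ d) :
    A.cdown d ≤ A.cup a := by
  obtain ⟨⟨ha_le, ha_prefixed⟩, -⟩ := A.isLeast_cup ha
  set z := A.cup a ⊓ d
  have hz_prefixed : A.A1 z d ≤ z := by
    refine le_inf ?_ ?_
    · calc A.A1 z d ≤ A.A1 z z := A.mono1 z d z z inf_le_right le_rfl le_rfl inf_le_right
        _ = A.A2 z z := A.diag z
        _ ≤ A.A2 a (A.cup a) := A.mono2 a _ z z ha_le le_rfl (le_inf ha_le had) inf_le_left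
        _ ≤ A.cup a := ha_prefixed
    · calc A.A1 z d ≤ A.A1 d d := A.mono1 z d d d inf_le_right le_rfl inf_le_right le_rfl
        _ ≤ d := hd
  exact ((A.isLeast_cdown hd).2 ⟨inf_le_right, hz_prefixed⟩).trans inf_le_left

theorem cup_le_cup (hc : c ≤ A.A2 c c) (ha : a ≤ A.A2 a a) (hac : a ≤ c)
    (hc_le : c ≤ A.cup a) :
    A.cup c ≤ A.cup a := by
  obtain ⟨⟨ha_le, ha_prefixed⟩, -⟩ := A.isLeast_cup ha
  refine (A.isLeast_cup hc).2 ⟨hc_le, ?_⟩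
  calc A.A2 c (A.cup a) ≤ A.A2 a (A.cup a) := A.mono2 a _ c _ ha_le hc_le hac le_rfl
    _ ≤ A.cup a := ha_prefixed

end PartialApprox

theorem stmt9 (A : PartialApprox L) (a b c d : L)
    (hab : A.reliable a b) (hcd : A.prudent c d)
    (h1 : a ≤ c) (h2 : d ≤ b) :
    A.cdown b ≤ A.cdown d ∧ A.cup c ≤ A.cup a := by
  obtain ⟨hcd_rel, hc_cdown⟩ := hcd
  have hd := hcd_rel.A1_self_le
  have ha := hab.le_A2_self
  have hc_cup : c ≤ A.cup a := hc_cdown.trans (A.cdown_le_cup hd ha (h1.trans hcd_rel.1))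
  exact ⟨A.cdown_le_cdown hab.A1_self_le hd h2, A.cup_le_cup hcd_rel.le_A2_self ha h1 hc_cup⟩
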